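/- If the query range [Ts, Te) is a prefix of the root's interval (i.e., Ts = σ_root), then in a segment tree of height h there exists a hit set of size at most h. Symmetrically for suffixes (Te = τ_root). -/
import Mathlib


/-!
STATEMENT 1: If the query range [Ts, Te) is a prefix of the root's interval
(i.e., Ts = σ_root), then in a segment tree of height h there exists a hit set of
size at most h.  Symmetrically for suffixes (Te = τ_root).
-/

inductive SegTree : ℕ → ℕ → Type
  | leaf (t : ℕ) : SegTree t (t + 1)
  | node {a m b : ℕ} (l : SegTree a m) (r : SegTree m b) : SegTree a b

/-- Height: the maximum number of nodes on a root-to-leaf path. -/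
def SegTree.height : ∀ {a b : ℕ}, SegTree a b → ℕ
  | _, _, .leaf _ => 1
  | _, _, .node l r => max l.height r.height + 1

/-- The set of intervals of the nodes of the tree. -/
def SegTree.intervals : ∀ {a b : ℕ}, SegTree a b → Finset (ℕ × ℕ)
  | _, _, .leaf t => {(t, t + 1)}
  | a, b, .node l r => insert (a, b) (l.intervals ∪ r.intervals)

/-- A hit set for the query `[Ts, Te)`: a set of nodes of the tree whose intervals
are pairwise disjoint and whose union is `[Ts, Te)`. -/
def SegTree.IsHitSet {a b : ℕ} (t : SegTree a b) (Ts Te : ℕ)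
    (S : Finset (ℕ × ℕ)) : Prop :=
  (∀ I ∈ S, I ∈ t.intervals) ∧
  (∀ I ∈ S, ∀ J ∈ S, I ≠ J →
    Disjoint (Finset.Ico I.1 I.2) (Finset.Ico J.1 J.2)) ∧
  S.biUnion (fun I => Finset.Ico I.1 I.2) = Finset.Ico Ts Te

lemma SegTree.lt_of : ∀ {a b : ℕ}, SegTree a b → a < b
  | _, _, .leaf _ => Nat.lt_succ_self _
  | _, _, .node l r => lt_trans l.lt_of r.lt_of

lemma SegTree.self_mem_intervals {a b : ℕ} (t : SegTree a b) :
    (a, b) ∈ t.intervals := by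
  cases t <;> simp [SegTree.intervals]

lemma SegTree.bounds_of_mem : ∀ {a b : ℕ} (t : SegTree a b),
    ∀ I ∈ t.intervals, a ≤ I.1 ∧ I.2 ≤ b
  | _, _, .leaf t => by simp [SegTree.intervals]
  | a, b, .node l r => by
    intro I hI
    have hl := l.lt_of
    have hr := r.lt_of
    simp only [SegTree.intervals, Finset.mem_insert, Finset.mem_union] at hI
    rcases hI with h | h | h
    · simp [h]
    · have := l.bounds_of_mem I h; omega
    · have := r.bounds_of_mem I h; omega

theorem stmt_1 {a b : ℕ} (t : SegTree a b)
    (Ts Te : ℕ) (hTs : a ≤ Ts) (hTsTe : Ts < Te) (hTe : Te ≤ b)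
    (hps : Ts = a ∨ Te = b) :
    ∃ S : Finset (ℕ × ℕ), t.IsHitSet Ts Te S ∧ S.card ≤ t.height := by
  revert Ts Te
  induction t with
  | leaf n =>
    intro Ts Te hTs hTsTe hTe hps
    have h1 : Ts = n := by omega
    have h2 : Te = n + 1 := by omega
    subst h1 h2
    exact ⟨{(Ts, Ts + 1)}, ⟨by simp [SegTree.intervals], by simp, by simp⟩,
      by simp [SegTree.height]⟩
  | @node a m b l r ihl ihr =>
    intro Ts Te hTs hTsTe hTe hps
    have hlm := l.lt_of
    have hmr := r.lt_of
    by_cases hfull : Ts = a ∧ Te = b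
    · refine ⟨{(a, b)}, ⟨by simp [SegTree.intervals], by simp,
        by simp [hfull.1, hfull.2]⟩, ?_⟩
      simp [SegTree.height]
    · rcases hps with h | h
      · -- prefix case, Ts = a, Te < b
        have hTeb : Te < b := by
          rcases lt_or_eq_of_le hTe with h' | h'
          · exact h'
          · exact absurd ⟨h, h'⟩ hfull
        by_cases hm : Te ≤ m
        · obtain ⟨S, hS, hc⟩ := ihl Ts Te (by omega) hTsTe hm (Or.inl h)
          refine ⟨S, ⟨?_, hS.2.1, hS.2.2⟩, ?_⟩
          · intro I hI
            have := hS.1 I hI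
            simp only [SegTree.intervals, Finset.mem_insert, Finset.mem_union]
            tauto
          · simp only [SegTree.height]; omega
        · push_neg at hm
          obtain ⟨S, hS, hc⟩ := ihr m Te le_rfl hm (le_of_lt hTeb) (Or.inl rfl)
          refine ⟨insert (a, m) S, ⟨?_, ?_, ?_⟩, ?_⟩
          · intro I hI
            simp only [Finset.mem_insert] at hI
            simp only [SegTree.intervals, Finset.mem_insert, Finset.mem_union]
            rcases hI with h' | h'
            · exact Or.inr (Or.inl (h' ▸ l.self_mem_intervals))
            · exact Or.inr (Or.inr (hS.1 I h'))
          · intro I hI J hJ hne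
            simp only [Finset.mem_insert] at hI hJ
            rcases hI with hI | hI <;> rcases hJ with hJ | hJ
            · exact absurd (hI.trans hJ.symm) hne
            · have := (r.bounds_of_mem J (hS.1 J hJ)).1
              subst hI
              simp only [Finset.disjoint_left, Finset.mem_Ico]
              omega
            · have := (r.bounds_of_mem I (hS.1 I hI)).1
              subst hJ
              simp only [Finset.disjoint_left, Finset.mem_Ico]
              omega
            · exact hS.2.1 I hI J hJ hne
          · have hnm : (a, m) ∉ S := by
              intro hmem
              have := (r.bounds_of_mem _ (hS.1 _ hmem)).1
              simp at this; omega
            rw [Finset.biUnion_insert, hS.2.2]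
            rw [Finset.Ico_union_Ico_eq_Ico (by omega) (by omega)]
            rw [h]
          · calc (insert (a, m) S).card ≤ S.card + 1 := Finset.card_insert_le _ _
              _ ≤ r.height + 1 := by omega
              _ ≤ (SegTree.node l r).height := by simp [SegTree.height]
      · -- suffix case, Te = b, a < Ts
        have hTsa : a < Ts := by
          rcases lt_or_eq_of_le hTs with h' | h'
          · exact h'
          · exact absurd ⟨h'.symm, h⟩ hfull
        by_cases hm : m ≤ Ts
        · obtain ⟨S, hS, hc⟩ := ihr Ts Te hm hTsTe hTe (Or.inr h)
          refine ⟨S, ⟨?_, hS.2.1, hS.2.2⟩, ?_⟩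
          · intro I hI
            have := hS.1 I hI
            simp only [SegTree.intervals, Finset.mem_insert, Finset.mem_union]
            tauto
          · simp only [SegTree.height]; omega
        · push_neg at hm
          obtain ⟨S, hS, hc⟩ := ihl Ts m (le_of_lt hTsa) hm le_rfl (Or.inr rfl)
          refine ⟨insert (m, b) S, ⟨?_, ?_, ?_⟩, ?_⟩
          · intro I hI
            simp only [Finset.mem_insert] at hI
            simp only [SegTree.intervals, Finset.mem_insert, Finset.mem_union]
            rcases hI with h' | h'
            · exact Or.inr (Or.inr (h' ▸ r.self_mem_intervals))
            · exact Or.inr (Or.inl (hS.1 I h'))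
          · intro I hI J hJ hne
            simp only [Finset.mem_insert] at hI hJ
            rcases hI with hI | hI <;> rcases hJ with hJ | hJ
            · exact absurd (hI.trans hJ.symm) hne
            · have := (l.bounds_of_mem J (hS.1 J hJ)).2
              subst hI
              simp only [Finset.disjoint_left, Finset.mem_Ico]
              omega
            · have := (l.bounds_of_mem I (hS.1 I hI)).2
              subst hJ
              simp only [Finset.disjoint_left, Finset.mem_Ico]
              omega
            · exact hS.2.1 I hI J hJ hne
          · rw [Finset.biUnion_insert, hS.2.2]
            rw [Finset.union_comm]
            rw [Finset.Ico_union_Ico_eq_Ico (by omega) (by omega)]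
            rw [h]
          · calc (insert (m, b) S).card ≤ S.card + 1 := Finset.card_insert_le _ _
              _ ≤ l.height + 1 := by omega
              _ ≤ (SegTree.node l r).height := by simp [SegTree.height]
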